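/- arXiv:1309.7303 — 14 statements merged into one kernel-verified Lean document; each statement's English description precedes it below -/
import Mathlib

section
/- An ε-standard variadic operation F : X* → X ∪ {ε} is unarily range-idempotent (F₁ ∘ F restricted to nonempty strings equals F restricted to nonempty strings) if and only if it is unarily quasi-range-idempotent (ran(F₁) = ran(F restricted to nonempty strings)) and satisfies F₁ ∘ F₁ = F₁. -/
/-- `F` is ε-standard: `F(x) = F(ε)` only if `x = ε`, and `F(ε) = ε`. -/
def EpsStandard {X : Type*} (F : List X → Option X) : Prop :=
  (∀ x : List X, F x = F [] → x = []) ∧ F [] = none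

/-- an ε-standard operation is unarily range-idempotent
(`F₁ ∘ F♭ = F♭`) iff it is unarily quasi-range-idempotent
(`ran F₁ = ran F♭`) and `F₁ ∘ F₁ = F₁`. -/
theorem unarily_range_idempotent_iff {X : Type*} [Nonempty X]
    (F : List X → Option X) (hF : EpsStandard F) :
    (∀ x : List X, x ≠ [] → (F x).bind (fun a => F [a]) = F x) ↔
      (Set.range (fun a : X => F [a]) = F '' {x : List X | x ≠ []}) ∧
        (∀ a : X, (F [a]).bind (fun b => F [b]) = F [a]) := by
  obtain ⟨h1, h2⟩ := hF
  have hsome : ∀ x : List X, x ≠ [] → ∃ c, F x = some c := by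
    intro x hx
    cases hc : F x with
    | none => exact absurd (h1 x (hc.trans h2.symm)) hx
    | some c => exact ⟨c, rfl⟩
  constructor
  · intro h
    constructor
    · ext y
      constructor
      · rintro ⟨a, rfl⟩
        exact ⟨[a], by simp, rfl⟩
      · rintro ⟨x, hx, rfl⟩
        obtain ⟨c, hc⟩ := hsome x hx
        refine ⟨c, ?_⟩
        have := h x hx
        rw [hc] at this ⊢
        exact this
    · intro a
      exact h [a] (by simp)
  · rintro ⟨hr, hi⟩ x hx
    obtain ⟨c, hc⟩ := hsome x hx
    have : F x ∈ Set.range (fun a : X => F [a]) := hr ▸ ⟨x, hx, rfl⟩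
    obtain ⟨a, ha⟩ := this
    have := hi a
    simp only at ha
    rw [ha, hc] at this
    rw [hc]
    exact this
end

section
/- Let F : X* → Y be a unarily quasi-range-idempotent variadic function and let g be a quasi-inverse of F₁. Then the ε-standard operation H : X* → X ∪ {ε} defined by H♭ = g ∘ F♭ (and H(ε) = ε) is unarily range-idempotent, satisfies F♭ = F₁ ∘ H♭, and F₁ restricted to ran(H♭) is one-to-one. -/
/-- `g` is a quasi-inverse of `f`: `f ∘ g` is the identity on `ran f`,
and `g` restricted to `ran f` has the same range as `g`. -/
def QuasiInverse {A B : Type*} (f : A → B) (g : B → A) : Prop :=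
  (∀ b ∈ Set.range f, f (g b) = b) ∧ g '' Set.range f = Set.range g

/-- if `F : X* → Y` is unarily quasi-range-idempotent and `g` is a
quasi-inverse of `F₁`, then the ε-standard operation `H` with `H♭ = g ∘ F♭`
is unarily range-idempotent, satisfies `F♭ = F₁ ∘ H♭`, and `F₁` is one-to-one
on `ran H♭`. -/
theorem quasi_inverse_factorization {X Y : Type*} [Nonempty X]
    (F : List X → Y)
    (hqri : Set.range (fun a : X => F [a]) = F '' {x : List X | x ≠ []})
    (g : Y → X) (hg : QuasiInverse (fun a : X => F [a]) g)
    (H : List X → Option X)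
    (hH : H [] = none ∧ ∀ x : List X, x ≠ [] → H x = some (g (F x))) :
    -- H is ε-standard
    ((∀ x : List X, H x = H [] → x = []) ∧ H [] = none) ∧
    -- H is unarily range-idempotent: H₁ ∘ H♭ = H♭
    (∀ x : List X, x ≠ [] → (H x).bind (fun a => H [a]) = H x) ∧
    -- F♭ = F₁ ∘ H♭
    (∀ x : List X, x ≠ [] → (H x).map (fun a => F [a]) = some (F x)) ∧
    -- F₁ is one-to-one on ran H♭
    Set.InjOn (fun a : X => F [a]) {a : X | ∃ x : List X, x ≠ [] ∧ H x = some a} := by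
  obtain ⟨hH0, hHx⟩ := hH
  obtain ⟨hginv, _⟩ := hg
  have hmem : ∀ x : List X, x ≠ [] → F x ∈ Set.range (fun a : X => F [a]) := by
    intro x hx
    rw [hqri]
    exact ⟨x, hx, rfl⟩
  have key : ∀ x : List X, x ≠ [] → F [g (F x)] = F x := fun x hx => hginv _ (hmem x hx)
  refine ⟨⟨fun x hx => ?_, hH0⟩, fun x hx => ?_, fun x hx => ?_, ?_⟩
  · by_contra h
    rw [hHx x h, hH0] at hx
    exact Option.some_ne_none _ hx
  · rw [hHx x hx]
    simp only [Option.bind_some]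
    rw [hHx _ (by simp), key x hx]
  · rw [hHx x hx]
    simp [key x hx]
  · rintro a ⟨x, hx, hax⟩ b ⟨y, hy, hby⟩ hab
    rw [hHx x hx] at hax; rw [hHx y hy] at hby
    have ha : a = g (F x) := (Option.some_injective _ hax).symm
    have hb : b = g (F y) := (Option.some_injective _ hby).symm
    have h1 : F [a] = F x := by rw [ha]; exact key x hx
    have h2 : F [b] = F y := by rw [hb]; exact key y hy
    calc a = g (F [a]) := by rw [h1, ha]
    _ = g (F [b]) := by simpa using congrArg g hab
    _ = b := by rw [h2, hb]
end

section
/- A variadic function F : X* → Y is unarily quasi-range-idempotent if and only if there exists an ε-standard operation H : X* → X ∪ {ε} such that F♭ = F₁ ∘ H♭. -/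
/-- `F : X* → Y` is unarily quasi-range-idempotent
(`ran F₁ = ran F♭`) iff there is an ε-standard operation `H` with
`F♭ = F₁ ∘ H♭`. -/
theorem uqri_iff_exists_factorization {X Y : Type*} [Nonempty X]
    (F : List X → Y) :
    (Set.range (fun a : X => F [a]) = F '' {x : List X | x ≠ []}) ↔
      ∃ H : List X → Option X, EpsStandard H ∧
        ∀ x : List X, x ≠ [] → (H x).map (fun a => F [a]) = some (F x) := by
  constructor
  · intro hr
    have hex : ∀ x : List X, x ≠ [] → ∃ a : X, F [a] = F x := by
      intro x hx
      have : F x ∈ Set.range (fun a : X => F [a]) := by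
        rw [hr]; exact ⟨x, hx, rfl⟩
      exact this
    classical
    refine ⟨fun x => if h : x = [] then none else some (Classical.choose (hex x h)), ⟨?_, by simp⟩, ?_⟩
    · intro x hx
      by_contra h
      simp [h] at hx
    · intro x hx
      simp [hx, Classical.choose_spec (hex x hx)]
  · rintro ⟨H, ⟨hstd, hnone⟩, hfac⟩
    ext y
    constructor
    · rintro ⟨a, rfl⟩
      exact ⟨[a], by simp, rfl⟩
    · rintro ⟨x, hx, rfl⟩
      have := hfac x hx
      cases h : H x with
      | none => rw [h] at this; simp at this
      | some b =>
        rw [h] at this; simp at this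
        exact ⟨b, this⟩
end

section
/- A variadic function F : X* → Y is unarily quasi-range-idempotent if and only if there exist a unarily idempotent ε-standard operation H : X* → X ∪ {ε} (i.e., H₁ = id) and a function f : X → Y such that F♭ = f ∘ H♭; moreover in that case necessarily f = F₁. -/
/-- `F : X* → Y` is unarily quasi-range-idempotent iff there are a
unarily idempotent (`H₁ = id`) ε-standard operation `H` and `f : X → Y` with
`F♭ = f ∘ H♭`; in that case necessarily `f = F₁`. -/
theorem uqri_iff_unarily_idempotent_factorization {X Y : Type*} [Nonempty X]
    (F : List X → Y) :
    ((Set.range (fun a : X => F [a]) = F '' {x : List X | x ≠ []}) ↔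
      ∃ (H : List X → Option X) (f : X → Y), EpsStandard H ∧
        (∀ a : X, H [a] = some a) ∧
        (∀ x : List X, x ≠ [] → (H x).map f = some (F x))) ∧
    (∀ (H : List X → Option X) (f : X → Y), EpsStandard H →
        (∀ a : X, H [a] = some a) →
        (∀ x : List X, x ≠ [] → (H x).map f = some (F x)) →
        f = fun a : X => F [a]) := by
  constructor
  · constructor
    · intro hr
      classical
      set g : List X → X := fun x =>
        if h : ∃ a, x = [a] then h.choose
        else if h2 : ∃ a, F [a] = F x then h2.choose else Classical.arbitrary X with hg
      refine ⟨fun x => if x = [] then none else some (g x), fun a => F [a], ⟨?_, ?_⟩, ?_, ?_⟩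
      · intro x hx
        by_contra hne
        simp [hne] at hx
      · simp
      · intro a
        have h : ∃ b, [a] = [b] := ⟨a, rfl⟩
        have : h.choose = a := by
          have := h.choose_spec
          simpa [eq_comm] using this
        simp [hg, h, this]
      · intro x hx
        simp only [if_neg hx]
        have hgx : F [g x] = F x := by
          by_cases h : ∃ a, x = [a]
          · have hc := h.choose_spec
            simp [hg, h, ← hc]
          · have h2 : ∃ a, F [a] = F x := by
              have h3 : F x ∈ F '' {y : List X | y ≠ []} := ⟨x, hx, rfl⟩
              rw [← hr] at h3
              obtain ⟨a, ha⟩ := h3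
              exact ⟨a, ha⟩
            simp [hg, h, h2, h2.choose_spec]
        simp [hgx]
    · rintro ⟨H, f, ⟨hstd, hnone⟩, hid, hfac⟩
      apply Set.eq_of_subset_of_subset
      · rintro _ ⟨a, rfl⟩
        exact ⟨[a], by simp, rfl⟩
      · rintro _ ⟨x, hx, rfl⟩
        have h := hfac x hx
        obtain ⟨b, hb⟩ : ∃ b, H x = some b := by
          cases hHx : H x with
          | none => exact absurd (hstd x (by rw [hHx, hnone])) hx
          | some b => exact ⟨b, rfl⟩
        have hfb : f b = F x := by simpa [hb] using h
        have hb2 : f b = F [b] := by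
          have := hfac [b] (by simp)
          simpa [hid b] using this
        exact ⟨b, hb2.symm.trans hfb⟩
  · intro H f hstd hid hfac
    funext a
    have := hfac [a] (by simp)
    simpa [hid a] using this
end

section
/- If F : X* → Y satisfies F♭ = f ∘ H♭ for a unarily range-idempotent ε-standard operation H and some f : X → Y, then F♭ = F₁ ∘ H♭; moreover, if h = F₁ restricted to ran(H♭) is one-to-one, then h⁻¹ is a quasi-inverse of F₁. -/
/-- if `F♭ = f ∘ H♭` for a unarily range-idempotent ε-standard
operation `H` and some `f : X → Y`, then `F♭ = F₁ ∘ H♭`; moreover if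
`h = F₁|ran(H♭)` is one-to-one then `h⁻¹` is a quasi-inverse of `F₁`. -/
theorem range_idempotent_factor_gives_quasi_inverse {X Y : Type*} [Nonempty X]
    (F : List X → Y) (H : List X → Option X) (f : X → Y)
    (hHstd : (∀ x : List X, H x = H [] → x = []) ∧ H [] = none)
    (hHri : ∀ x : List X, x ≠ [] → (H x).bind (fun a => H [a]) = H x)
    (hfact : ∀ x : List X, x ≠ [] → (H x).map f = some (F x)) :
    (∀ x : List X, x ≠ [] → (H x).map (fun a => F [a]) = some (F x)) ∧
    (Set.InjOn (fun a : X => F [a])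
        {a : X | ∃ x : List X, x ≠ [] ∧ H x = some a} →
      ∃ g : Y → X,
        (∀ a ∈ {a : X | ∃ x : List X, x ≠ [] ∧ H x = some a}, g (F [a]) = a) ∧
        QuasiInverse (fun a : X => F [a]) g) := by
  classical
  -- basic facts
  have hsome : ∀ x : List X, x ≠ [] → ∃ a, H x = some a := by
    intro x hx
    cases h : H x with
    | some a => exact ⟨a, rfl⟩
    | none =>
      exact absurd (hHstd.1 x (by rw [h, hHstd.2])) hx
  have hH1 : ∀ (a : X) (x : List X), x ≠ [] → H x = some a → H [a] = some a := by
    intro a x hx hHx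
    have := hHri x hx
    rw [hHx] at this
    simpa using this
  have hFa : ∀ (a : X) (x : List X), x ≠ [] → H x = some a → F x = f a := by
    intro a x hx hHx
    have := hfact x hx
    rw [hHx] at this
    simpa using this.symm
  -- S membership gives F [a] = f a
  have hFS : ∀ a : X, (∃ x : List X, x ≠ [] ∧ H x = some a) → F [a] = f a := by
    rintro a ⟨x, hx, hHx⟩
    exact hFa a [a] (by simp) (hH1 a x hx hHx)
  have key1 : ∀ x : List X, x ≠ [] → (H x).map (fun a => F [a]) = some (F x) := by
    intro x hx
    obtain ⟨a, ha⟩ := hsome x hx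
    rw [ha]
    have h1 : F [a] = f a := hFS a ⟨x, hx, ha⟩
    have h2 : F x = f a := hFa a x hx ha
    simp [h1, h2]
  refine ⟨key1, ?_⟩
  intro hinj
  set S : Set X := {a : X | ∃ x : List X, x ≠ [] ∧ H x = some a} with hS
  -- every value of F₁ is attained on S
  have hP : ∀ b ∈ Set.range (fun a : X => F [a]), ∃ a, a ∈ S ∧ F [a] = b := by
    rintro b ⟨c, rfl⟩
    obtain ⟨a, ha⟩ := hsome [c] (by simp)
    have haS : a ∈ S := ⟨[c], by simp, ha⟩
    refine ⟨a, haS, ?_⟩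
    have h1 : F [a] = f a := hFS a haS
    have h2 : F [c] = f a := hFa a [c] (by simp) ha
    simp only []
    rw [h1, h2]
  obtain ⟨a₀⟩ := ‹Nonempty X›
  have hb₀ : ∃ a, a ∈ S ∧ F [a] = F [a₀] := hP (F [a₀]) ⟨a₀, rfl⟩
  refine ⟨fun b => if h : ∃ a, a ∈ S ∧ F [a] = b then h.choose else hb₀.choose, ?_, ?_, ?_⟩
  · intro a haS
    have h : ∃ a', a' ∈ S ∧ F [a'] = F [a] := ⟨a, haS, rfl⟩
    simp only [dif_pos h]
    exact hinj h.choose_spec.1 haS h.choose_spec.2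
  · intro b hb
    have h : ∃ a, a ∈ S ∧ F [a] = b := hP b hb
    simp only [dif_pos h]
    exact h.choose_spec.2
  · apply Set.Subset.antisymm
    · exact Set.image_subset_range _ _
    · rintro x ⟨b, rfl⟩
      by_cases h : ∃ a, a ∈ S ∧ F [a] = b
      · refine ⟨b, ?_, rfl⟩
        exact ⟨h.choose, h.choose_spec.2⟩
      · refine ⟨F [a₀], ⟨a₀, rfl⟩, ?_⟩
        simp only [dif_neg h, dif_pos hb₀]
end

section
/- An ε-standard operation F : X* → X ∪ {ε} is associative if and only if the following hold: (i) F₁ ∘ F₁ = F₁ and F₁ ∘ F₂ = F₂; (ii) F₂(xy) = F₂(F₁(x) y) = F₂(x F₁(y)) for all x, y ∈ X; (iii) F₂ is an associative binary operation; (iv) Fₙ(x₁⋯xₙ) = F₂(Fₙ₋₁(x₁⋯xₙ₋₁) xₙ) for all n ≥ 3. -/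
/-- Associativity of a variadic operation: `F(xyz) = F(x F(y) z)`. -/
def VarAssoc {X : Type*} (F : List X → Option X) : Prop :=
  ∀ x y z : List X, F (x ++ y ++ z) = F (x ++ (F y).toList ++ z)

/-- an ε-standard operation is associative iff
(i) `F₁∘F₁ = F₁` and `F₁∘F₂ = F₂`,
(ii) `F₂(xy) = F₂(F₁(x)y) = F₂(xF₁(y))`,
(iii) `F₂` is associative, and
(iv) `Fₙ(x₁⋯xₙ) = F₂(Fₙ₋₁(x₁⋯xₙ₋₁)xₙ)` for `n ≥ 3`. -/
theorem assoc_characterization {X : Type*} [Nonempty X]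
    (F : List X → Option X) (hF : EpsStandard F) :
    VarAssoc F ↔
      ((∀ a : X, (F [a]).bind (fun b => F [b]) = F [a]) ∧
        (∀ a b : X, (F [a, b]).bind (fun c => F [c]) = F [a, b])) ∧
      (∀ a b : X, F [a, b] = (F [a]).bind (fun a' => F [a', b]) ∧
        F [a, b] = (F [b]).bind (fun b' => F [a, b'])) ∧
      (∀ a b c : X, (F [a, b]).bind (fun d => F [d, c]) =
        (F [b, c]).bind (fun d => F [a, d])) ∧
      (∀ (x : List X) (a : X), 2 ≤ x.length →
        F (x ++ [a]) = (F x).bind (fun b => F [b, a])) := by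
  have hne : ∀ x : List X, x ≠ [] → ∃ b, F x = some b := by
    intro x hx
    cases h' : F x with
    | none => exact absurd (hF.1 x (by rw [h', hF.2])) hx
    | some b => exact ⟨b, rfl⟩
  constructor
  · intro h
    refine ⟨⟨?_, ?_⟩, ?_, ?_, ?_⟩
    · intro a
      obtain ⟨b, hb⟩ := hne [a] (by simp)
      have := h [] [a] []
      simp [hb] at this ⊢
      exact this.symm
    · intro a b
      obtain ⟨c, hc⟩ := hne [a, b] (by simp)
      have := h [] [a, b] []
      simp [hc] at this ⊢
      exact this.symm
    · intro a b
      constructor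
      · obtain ⟨a', ha⟩ := hne [a] (by simp)
        have := h [] [a] [b]
        simp [ha] at this ⊢
        exact this
      · obtain ⟨b', hb⟩ := hne [b] (by simp)
        have := h [a] [b] []
        simp [hb] at this ⊢
        exact this
    · intro a b c
      obtain ⟨d, hd⟩ := hne [a, b] (by simp)
      obtain ⟨e, he⟩ := hne [b, c] (by simp)
      have h1 := h [] [a, b] [c]
      have h2 := h [a] [b, c] []
      simp [hd] at h1
      simp [he] at h2
      simp [hd, he]
      rw [← h1, ← h2]
    · intro x a hx
      obtain ⟨b, hb⟩ := hne x (by rintro rfl; simp at hx)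
      have := h [] x [a]
      simp [hb] at this ⊢
      exact this
  · rintro ⟨⟨h1, h2⟩, hii, h4, h5⟩
    -- fold lemma: peel off the last element of a list of length ≥ 1
    have hfold : ∀ (x : List X) (a : X), x ≠ [] →
        F (x ++ [a]) = (F x).bind (fun b => F [b, a]) := by
      intro x a hx
      match x with
      | [] => exact absurd rfl hx
      | [c] => simpa using (hii c a).1
      | c :: d :: t => exact h5 _ a (by simp)
    -- values of F on nonempty lists are F₁-fixed
    have hfix : ∀ (x : List X) (b : X), x ≠ [] → F x = some b → F [b] = some b := by
      intro x b hx hxb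
      induction x using List.reverseRecOn with
      | nil => exact absurd rfl hx
      | append_singleton y a ih =>
        rcases eq_or_ne y ([] : List X) with rfl | hy
        · simp at hxb
          have := h1 a
          rwa [hxb] at this
        · obtain ⟨d, hd⟩ := hne y hy
          rw [hfold y a hy, hd] at hxb
          simp at hxb
          have := h2 d a
          rwa [hxb] at this
    -- prepend lemma
    have hD : ∀ (y : List X) (x : List X) (b : X), y ≠ [] → F y = some b →
        F (x ++ y) = F (x ++ [b]) := by
      intro y
      induction y using List.reverseRecOn with
      | nil => intro x b hy; exact absurd rfl hy
      | append_singleton y' a ih =>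
        intro x b hy hyb
        rcases eq_or_ne y' ([] : List X) with rfl | hy'
        · simp at hyb
          rcases eq_or_ne x ([] : List X) with rfl | hx
          · have := h1 a
            rw [hyb] at this
            simp at this ⊢
            rw [hyb, this]
          · obtain ⟨c, hc⟩ := hne x hx
            simp only [List.nil_append]
            rw [hfold x a hx, hfold x b hx, hc]
            simp
            have := (hii c a).2
            rw [hyb] at this
            simpa using this
        · obtain ⟨d, hd⟩ := hne y' hy'
          have hFy : F (y' ++ [a]) = F [d, a] := by
            rw [hfold y' a hy', hd]; rfl
          have hda : F [d, a] = some b := by rw [← hFy, hyb]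
          rcases eq_or_ne x ([] : List X) with rfl | hx
          · simp only [List.nil_append]
            rw [hyb]
            exact (hfix _ b hy hyb).symm
          · obtain ⟨c, hc⟩ := hne x hx
            have hxy' : x ++ y' ≠ [] := by simp [hx]
            calc F (x ++ (y' ++ [a])) = F ((x ++ y') ++ [a]) := by rw [List.append_assoc]
              _ = (F (x ++ y')).bind (fun u => F [u, a]) := hfold _ a hxy'
              _ = (F (x ++ [d])).bind (fun u => F [u, a]) := by rw [ih x d hy' hd]
              _ = (F [c, d]).bind (fun u => F [u, a]) := by rw [hfold x d hx, hc]; rfl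
              _ = (F [d, a]).bind (fun u => F [c, u]) := h4 c d a
              _ = F [c, b] := by rw [hda]; rfl
              _ = F (x ++ [b]) := by rw [hfold x b hx, hc]; rfl
    -- absorb lemma: replace a nonempty prefix by its value
    have hB : ∀ (z l : List X) (b : X), l ≠ [] → F l = some b →
        F (l ++ z) = F ([b] ++ z) := by
      intro z
      induction z using List.reverseRecOn with
      | nil =>
        intro l b hl hlb
        simp only [List.append_nil]
        rw [hlb]
        exact (hfix l b hl hlb).symm
      | append_singleton z' a ih =>
        intro l b hl hlb
        rw [← List.append_assoc, ← List.append_assoc,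
          hfold (l ++ z') a (by simp [hl]), hfold ([b] ++ z') a (by simp),
          ih l b hl hlb]
    intro x y z
    rcases eq_or_ne y ([] : List X) with rfl | hy
    · simp [hF.2]
    · obtain ⟨b, hb⟩ := hne y hy
      obtain ⟨c, hc⟩ := hne (x ++ y) (by simp [hy])
      have hxb : F (x ++ [b]) = some c := by rw [← hD y x b hy hb, hc]
      rw [hb]
      calc F (x ++ y ++ z) = F ([c] ++ z) := hB z (x ++ y) c (by simp [hy]) hc
        _ = F ((x ++ [b]) ++ z) := (hB z (x ++ [b]) c (by simp) hxb).symm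
        _ = F (x ++ (some b).toList ++ z) := by simp
end

section
/- A binary operation F : X² → X is associative if and only if there exists an associative ε-standard variadic operation G : X* → X ∪ {ε} with F = G₂. -/
private lemma foldl_assoc_aux {X : Type*} (f : X → X → X)
    (h : ∀ a b c : X, f (f a b) c = f a (f b c)) :
    ∀ (t : List X) (c a : X), List.foldl f (f c a) t = f c (List.foldl f a t) := by
  intro t
  induction t with
  | nil => intro c a; rfl
  | cons d t ih =>
      intro c a
      simp only [List.foldl_cons, h c a d, ih]

/-- a binary operation is associative iff it is the binary part
of some associative ε-standard variadic operation. -/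
theorem binary_assoc_iff_extends {X : Type*} [Nonempty X] (f : X → X → X) :
    (∀ a b c : X, f (f a b) c = f a (f b c)) ↔
      ∃ G : List X → Option X, EpsStandard G ∧ VarAssoc G ∧
        ∀ a b : X, G [a, b] = some (f a b) := by
  constructor
  · intro h
    refine ⟨fun l => match l with | [] => none | a :: t => some (List.foldl f a t),
      ⟨?_, rfl⟩, ?_, fun a b => rfl⟩
    · intro x hx
      cases x with
      | nil => rfl
      | cons a t => simp at hx
    · intro x y z
      cases y with
      | nil => simp
      | cons a t =>
          cases x with
          | nil => simp [List.foldl_append]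
          | cons b s =>
              simp only [List.cons_append, List.foldl_append, List.foldl_cons,
                List.foldl_nil, Option.toList_some]
              rw [foldl_assoc_aux f h t _ a]
  · rintro ⟨G, ⟨_, hnil⟩, hva, hbin⟩
    intro a b c
    have h1 := hva [] [a, b] [c]
    have h2 := hva [a] [b, c] []
    simp only [hbin, List.nil_append, List.append_nil, Option.toList_some] at h1 h2
    have : G [a, b, c] = some (f (f a b) c) := by
      rw [show ([a, b] ++ [c] : List X) = [a, b, c] from rfl] at h1
      rw [h1]; exact hbin _ _
    have h2' : G [a, b, c] = some (f a (f b c)) := by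
      rw [show ([a] ++ [b, c] : List X) = [a, b, c] from rfl] at h2
      rw [h2]; exact hbin _ _
    rw [this] at h2'
    exact Option.some.inj h2'
end

section
/- A function F : X* → Y is preassociative if and only if for all strings x, x', y, y' ∈ X*: F(x) = F(x') and F(y) = F(y') together imply F(xy) = F(x'y'). -/
/-- `F` is preassociative: `F(y) = F(y')` implies `F(xyz) = F(xy'z)`. -/
def Preassociative {X Y : Type*} (F : List X → Y) : Prop :=
  ∀ x y y' z : List X, F y = F y' → F (x ++ y ++ z) = F (x ++ y' ++ z)

/-- `F` is preassociative iff `F(x) = F(x')` and `F(y) = F(y')`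
together imply `F(xy) = F(x'y')`. -/
theorem preassoc_iff_two_equalities {X Y : Type*} [Nonempty X]
    (F : List X → Y) :
    Preassociative F ↔
      ∀ x x' y y' : List X, F x = F x' → F y = F y' →
        F (x ++ y) = F (x' ++ y') := by
  constructor
  · intro hP x x' y y' hx hy
    have h1 : F (([] : List X) ++ x ++ y) = F (([] : List X) ++ x' ++ y) :=
      hP [] x x' y hx
    have h2 : F (x' ++ y ++ []) = F (x' ++ y' ++ []) := hP x' y y' [] hy
    simpa using h1.trans (by simpa using h2)
  · intro h x y y' z hy
    have h1 : F (x ++ y) = F (x ++ y') := h x x y y' rfl hy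
    have := h (x ++ y) (x ++ y') z z h1 rfl
    simpa [List.append_assoc] using this
end

section
/- An ε-standard operation F : X* → X ∪ {ε} is associative if and only if it is preassociative and unarily range-idempotent (F₁ ∘ F♭ = F♭). -/
/-- an ε-standard operation is associative iff it is
preassociative and unarily range-idempotent (`F₁ ∘ F♭ = F♭`). -/
theorem assoc_iff_preassoc_and_range_idempotent {X : Type*} [Nonempty X]
    (F : List X → Option X) (hF : EpsStandard F) :
    VarAssoc F ↔
      Preassociative F ∧
        (∀ x : List X, x ≠ [] → (F x).bind (fun a => F [a]) = F x) := by
  obtain ⟨hstd, hnil⟩ := hF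
  constructor
  · intro hA
    constructor
    · intro x y y' z h
      rw [hA x y z, hA x y' z, h]
    · intro x hx
      cases hFx : F x with
      | none =>
        exact absurd (hstd x (by rw [hFx, hnil])) hx
      | some a =>
        have h1 : F x = F [a] := by
          have := hA [] x []
          simpa [hFx] using this
        simp [← h1, hFx]
  · rintro ⟨hP, hI⟩ x y z
    rcases eq_or_ne y [] with rfl | hy
    · simp [hnil]
    · cases hFy : F y with
      | none => exact absurd (hstd y (by rw [hFy, hnil])) hy
      | some a =>
        have h1 : F [a] = F y := by
          have := hI y hy
          rw [hFy] at this
          rw [hFy]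
          simpa using this
        exact (hP x y [a] z (h1.symm ▸ rfl)).trans (by simp [hFy])
end

section
/- An ε-standard operation F : X* → X ∪ {ε} is associative if and only if F(xyz) = F(x F(y) z) holds for all strings x, y, z ∈ X* with |xz| ≤ 1. -/
/-- an ε-standard operation is associative iff
`F(xyz) = F(x F(y) z)` holds whenever `|xz| ≤ 1`. -/
theorem assoc_iff_length_le_one {X : Type*} [Nonempty X]
    (F : List X → Option X) (hF : EpsStandard F) :
    VarAssoc F ↔
      ∀ x y z : List X, (x ++ z).length ≤ 1 →
        F (x ++ y ++ z) = F (x ++ (F y).toList ++ z) := by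
  constructor
  · intro h x y z _
    exact h x y z
  · intro H
    -- single-letter rules
    have hL : ∀ (a : X) (w : List X), F (a :: w) = F (a :: (F w).toList) := by
      intro a w
      have := H [a] w [] (by simp)
      simpa using this
    have hR : ∀ (w : List X) (b : X), F (w ++ [b]) = F ((F w).toList ++ [b]) := by
      intro w b
      have := H [] w [b] (by simp)
      simpa using this
    -- base: F (y ++ z) = F (F y ++ z) for all z, by reverse induction on z
    have base : ∀ (z y : List X), F (y ++ z) = F ((F y).toList ++ z) := by
      intro z
      induction z using List.reverseRecOn with
      | nil => intro y; simpa using H [] y [] (by simp)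
      | append_singleton z' b ih =>
        intro y
        calc F (y ++ (z' ++ [b])) = F ((y ++ z') ++ [b]) := by rw [List.append_assoc]
          _ = F ((F (y ++ z')).toList ++ [b]) := hR _ b
          _ = F ((F ((F y).toList ++ z')).toList ++ [b]) := by rw [ih y]
          _ = F (((F y).toList ++ z') ++ [b]) := (hR _ b).symm
          _ = F ((F y).toList ++ (z' ++ [b])) := by rw [List.append_assoc]
    intro x
    induction x with
    | nil => intro y z; simpa using base z y
    | cons a x' ih =>
      intro y z
      calc F ((a :: x') ++ y ++ z) = F (a :: (x' ++ y ++ z)) := by simp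
        _ = F (a :: (F (x' ++ y ++ z)).toList) := hL a _
        _ = F (a :: (F (x' ++ (F y).toList ++ z)).toList) := by rw [ih y z]
        _ = F (a :: (x' ++ (F y).toList ++ z)) := (hL a _).symm
        _ = F ((a :: x') ++ (F y).toList ++ z) := by simp
end

section
/- If F : X* → Y is a preassociative standard function and g : Y → Y' is a function whose restriction to ran(F♭) is one-to-one, then the function H : X* → Y' defined by H♭ = g ∘ F♭ and H(ε) = a for some a ∉ ran(g restricted to ran(F♭)) is standard and preassociative. -/
/-- `F` is standard: `F(x) = F(ε)` only for `x = ε`. -/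
def VarStandard {X Y : Type*} (F : List X → Y) : Prop :=
  ∀ x : List X, F x = F [] → x = []

/-- left composition: if `F` is standard and preassociative and
`g` is one-to-one on `ran F♭`, then `H` with `H♭ = g ∘ F♭` and
`H(ε) = a ∉ ran(g|ran F♭)` is standard and preassociative. -/
theorem left_composition_preserves_preassoc {X Y Y' : Type*} [Nonempty X]
    (F : List X → Y) (hFstd : VarStandard F) (hFpa : Preassociative F)
    (g : Y → Y') (hg : Set.InjOn g (F '' {x : List X | x ≠ []}))
    (a : Y') (ha : a ∉ g '' (F '' {x : List X | x ≠ []}))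
    (H : List X → Y')
    (hH : H [] = a ∧ ∀ x : List X, x ≠ [] → H x = g (F x)) :
    VarStandard H ∧ Preassociative H := by
  obtain ⟨hHe, hHne⟩ := hH
  have himg : ∀ x : List X, x ≠ [] → H x ≠ a := by
    intro x hx hxa
    exact ha ⟨F x, ⟨x, hx, rfl⟩, by rw [← hHne x hx, hxa]⟩
  constructor
  · intro x hx
    by_contra hne
    exact himg x hne (by rw [hx, hHe])
  · intro x y y' z hyy'
    rcases eq_or_ne y [] with rfl | hy
    · rcases eq_or_ne y' [] with rfl | hy'
      · rfl
      · exact absurd hyy'.symm (by rw [hHe]; exact himg y' hy')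
    · rcases eq_or_ne y' [] with rfl | hy'
      · exact absurd hyy' (by rw [hHe]; exact himg y hy)
      · have hF : F y = F y' := hg ⟨y, hy, rfl⟩ ⟨y', hy', rfl⟩
          (by rw [← hHne y hy, ← hHne y' hy', hyy'])
        have h1 : x ++ y ++ z ≠ [] := by simp [hy]
        have h2 : x ++ y' ++ z ≠ [] := by simp [hy']
        rw [hHne _ h1, hHne _ h2, hFpa x y y' z hF]
end

section
/- Let F : X* → Y be preassociative. (a) If the restriction of F to length-n strings is a constant function, then so is the restriction to length-(n+1) strings. (b) If F is constant equal to c on both length-n and length-(n+1) strings, then F is constant equal to c on all strings of length ≥ n. -/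
/-- for a preassociative `F` and `n ≥ 1`:
(a) if `Fₙ` is constant then so is `Fₙ₊₁`;
(b) if `Fₙ` and `Fₙ₊₁` are the same constant `c`, then `Fₘ = c` for all `m ≥ n`. -/
theorem preassoc_constant_parts {X Y : Type*} [Nonempty X]
    (F : List X → Y) (hF : Preassociative F) (n : ℕ) (hn : 1 ≤ n) :
    ((∃ c : Y, ∀ x : List X, x.length = n → F x = c) →
      ∃ c : Y, ∀ x : List X, x.length = n + 1 → F x = c) ∧
    (∀ c : Y, (∀ x : List X, x.length = n → F x = c) →
      (∀ x : List X, x.length = n + 1 → F x = c) →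
      ∀ x : List X, n ≤ x.length → F x = c) := by
  obtain ⟨a0⟩ := ‹Nonempty X›
  have key : ∀ c : Y, (∀ x : List X, x.length = n → F x = c) →
      ∀ u v : List X, u.length = n + 1 → v.length = n + 1 → F u = F v := by
    intro c hc u v hu hv
    obtain ⟨a, u', rfl⟩ : ∃ a u', u = a :: u' := by
      cases u with
      | nil => simp at hu
      | cons a u' => exact ⟨a, u', rfl⟩
    obtain ⟨b, v', rfl⟩ : ∃ b v', v = b :: v' := by
      cases v with
      | nil => simp at hv
      | cons b v' => exact ⟨b, v', rfl⟩
    simp only [List.length_cons, Nat.add_right_cancel_iff] at hu hv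
    have h1 : F (a :: u') = F (a :: v') := by
      have := hF [a] u' v' [] (by rw [hc u' hu, hc v' hv])
      simpa using this
    have h2 : F (a :: v') = F (b :: v') := by
      rcases v'.eq_nil_or_concat with rfl | ⟨v'', e, rfl⟩
      · simp at hv; omega
      · have hlen : (a :: v'').length = n := by
          simp only [List.length_concat, List.length_append, List.length_cons] at hv ⊢; omega
        have hlen' : (b :: v'').length = n := by
          simp only [List.length_concat, List.length_append, List.length_cons] at hv ⊢; omega
        have := hF [] (a :: v'') (b :: v'') [e]
          (by rw [hc _ hlen, hc _ hlen'])
        simpa using this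
    rw [h1, h2]
  constructor
  · rintro ⟨c, hc⟩
    refine ⟨F (List.replicate (n + 1) a0), fun x hx => ?_⟩
    exact key c hc x _ hx (by simp)
  · intro c hc hc'
    have main : ∀ m, ∀ x : List X, x.length = m → n ≤ m → F x = c := by
      intro m
      induction m using Nat.strong_induction_on with
      | _ m ih =>
        intro x hx hnm
        rcases Nat.lt_or_ge m (n + 2) with h | h
        · have : m = n ∨ m = n + 1 := by omega
          rcases this with rfl | rfl
          · exact hc x hx
          · exact hc' x hx
        · obtain ⟨a, y, rfl⟩ : ∃ a y, x = a :: y := by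
            cases x with
            | nil => simp at hx; omega
            | cons a y => exact ⟨a, y, rfl⟩
          obtain ⟨b, y', rfl⟩ : ∃ b y', y = b :: y' := by
            cases y with
            | nil => simp at hx; omega
            | cons b y' => exact ⟨b, y', rfl⟩
          simp only [List.length_cons] at hx
          have hy : F (b :: y') = c :=
            ih (m - 1) (by omega) _ (by simp; omega) (by omega)
          have hy' : F y' = c :=
            ih (m - 2) (by omega) _ (by omega) (by omega)
          have hstep := hF [a] (b :: y') y' [] (by rw [hy, hy'])
          simp only [List.cons_append, List.nil_append, List.append_nil] at hstep
          rw [hstep]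
          exact ih (m - 1) (by omega) (a :: y') (by simp; omega) (by omega)
    intro x hx
    exact main x.length x rfl hx
end

section
/- If F, G : X* → Y are preassociative and unarily quasi-range-idempotent with F(ε) = G(ε), F₁ = G₁, and F₂ = G₂, then F = G. -/
/-- `F` is unarily quasi-range-idempotent: `ran F₁ = ran F♭`. -/
def UQRI {X Y : Type*} (F : List X → Y) : Prop :=
  Set.range (fun a : X => F [a]) = F '' {x : List X | x ≠ []}

/-- preassociative unarily quasi-range-idempotent functions are
determined by their nullary, unary, and binary parts. -/
theorem preassoc_uqri_determined {X Y : Type*} [Nonempty X]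
    (F G : List X → Y)
    (hFpa : Preassociative F) (hFq : UQRI F)
    (hGpa : Preassociative G) (hGq : UQRI G)
    (h0 : F [] = G []) (h1 : ∀ a : X, F [a] = G [a])
    (h2 : ∀ a b : X, F [a, b] = G [a, b]) : F = G := by
  funext x
  induction x with
  | nil => exact h0
  | cons c t ih =>
    cases t with
    | nil => exact h1 c
    | cons d s =>
      -- t = d :: s is nonempty, so F t is in range of F₁
      have hFt : F (d :: s) ∈ F '' {x : List X | x ≠ []} :=
        ⟨d :: s, by simp, rfl⟩
      rw [← hFq] at hFt
      obtain ⟨a, ha'⟩ := hFt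
      have ha : F [a] = F (d :: s) := ha'
      -- ha : F [a] = F (d :: s)
      have hGa : G [a] = G (d :: s) := by
        rw [← h1, ha, ih]
      have hF : F (c :: d :: s) = F [c, a] := by
        have := hFpa [c] (d :: s) [a] [] ha.symm
        simpa using this
      have hG : G (c :: d :: s) = G [c, a] := by
        have := hGpa [c] (d :: s) [a] [] hGa.symm
        simpa using this
      rw [hF, hG, h2]
end

section
/- A function F : X* → Y is strongly preassociative if and only if it is preassociative and each n-ary part Fₙ is a symmetric function (invariant under all permutations of its arguments). -/
/-- `F` is strongly preassociative: `F(xz) = F(x'z')` implies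
`F(xyz) = F(x'yz')`. -/
def StronglyPreassociative {X Y : Type*} (F : List X → Y) : Prop :=
  ∀ x x' y z z' : List X, F (x ++ z) = F (x' ++ z') →
    F (x ++ y ++ z) = F (x' ++ y ++ z')

/-- `F` is strongly preassociative iff it is preassociative and
each `Fₙ` is symmetric (invariant under permutations of the arguments). -/
theorem strongly_preassoc_iff_symmetric {X Y : Type*} [Nonempty X]
    (F : List X → Y) :
    StronglyPreassociative F ↔
      Preassociative F ∧ ∀ x x' : List X, x.Perm x' → F x = F x' := by
  constructor
  · intro hF
    constructor
    · intro x y y' z h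
      have h1 : F (x ++ y) = F (x ++ y') := by
        have := hF [] [] x y y' (by simpa using h)
        simpa using this
      have := hF (x ++ y) (x ++ y') z [] [] (by simpa using h1)
      simpa using this
    · intro x x' h
      induction h with
      | nil => rfl
      | cons a _ ih =>
        have := hF [] [] [a] _ _ (by simpa using ih)
        simpa using this
      | swap a b l =>
        have := hF [b] [] [a] l ([b] ++ l) (by simp)
        simpa using this
      | trans _ _ ih1 ih2 => exact ih1.trans ih2
  · rintro ⟨hpre, hsym⟩ x x' y z z' h
    have h1 : F ((x ++ z) ++ y) = F ((x' ++ z') ++ y) := by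
      have := hpre [] (x ++ z) (x' ++ z') y h
      simpa using this
    calc F (x ++ y ++ z) = F ((x ++ z) ++ y) := hsym _ _ (by
          simpa using (List.perm_append_comm (l₁ := y) (l₂ := z)).append_left x)
      _ = F ((x' ++ z') ++ y) := h1
      _ = F (x' ++ y ++ z') := hsym _ _ (by
          simpa using (List.perm_append_comm (l₁ := z') (l₂ := y)).append_left x')
end
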